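/- Let T_s > 0, Δ > 0, e_∞ > 0, a_l > 0, b_l > 0 and e₀ ∈ ℝ satisfy e₀ - Δ + e_∞ > 0. Set c_{2l} = 2·exp(b_l)/(exp(2b_l) - 1), and define K_{2l} : [0,∞) → ℝ by K_{2l}(t) = ((e₀ - Δ + e_∞)/c_{2l})·csch(a_l·t/(T_s - t) + b_l) - e_∞ for t ∈ [0, T_s), and K_{2l}(t) = -e_∞ for t ≥ T_s. Then: (i) c_{2l} = csch(b_l), and consequently K_{2l}(0) = e₀ - Δ; (ii) K_{2l} is strictly decreasing on [0, T_s]; (iii) K_{2l}(t) → -e_∞ as t → T_s from the left, so K_{2l} is continuous on [0,∞) (properties of the novel performance function (25)). -/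

import Mathlib

/-! The constant `c2l` is `csch bl` written with exponentials, so on `[0, Ts)` the performance
function is `(e₀ - Δ + einf) · csch (g t) / csch bl - einf` with `g t = al t / (Ts - t) + bl`.
The argument `g` increases from `g 0 = bl` to `+∞` as `t → Ts⁻`, while `csch` is positive and
decreases strictly to `0` on `(0, ∞)`; this gives the initial value, strict decrease and the left
limit `-einf` at `Ts`, where the constant branch takes over continuously. -/

open Real Filter Set Topology

theorem one_div_sinh_eq_two_mul_exp_div (x : ℝ) :
    1 / sinh x = 2 * exp x / (exp (2 * x) - 1) := by
  have h : exp (2 * x) - 1 = 2 * exp x * sinh x := by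
    rw [sinh_eq, two_mul, exp_add, exp_neg]
    field_simp
  rw [h, ← mul_div_mul_left 1 (sinh x) (by positivity : 2 * exp x ≠ 0), mul_one]

theorem tendsto_sinh_atTop : Tendsto sinh atTop atTop :=
  tendsto_atTop_mono' _ ((eventually_ge_atTop 0).mono fun _ hx => self_le_sinh_iff.2 hx)
    tendsto_id

theorem strictAntiOn_one_div_sinh : StrictAntiOn (fun x => 1 / sinh x) (Ioi 0) :=
  fun _ hx _ _ hxy => one_div_lt_one_div_of_lt (sinh_pos_iff.2 hx) (sinh_lt_sinh.2 hxy)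

section Argument

variable {a b T : ℝ}

theorem strictMonoOn_mul_div_sub (ha : 0 < a) (hT : 0 < T) :
    StrictMonoOn (fun t => a * t / (T - t)) (Iio T) := by
  intro s hs t ht hst
  rw [div_lt_div_iff₀ (sub_pos.2 hs) (sub_pos.2 ht)]
  nlinarith [mul_pos (mul_pos ha hT) (sub_pos.2 hst)]

theorem tendsto_mul_div_sub_nhdsLT (h : 0 < a * T) :
    Tendsto (fun t => a * t / (T - t)) (𝓝[<] T) atTop := by
  have hnum : Tendsto (fun t => a * t) (𝓝[<] T) (𝓝 (a * T)) :=
    (continuous_const_mul a).continuousWithinAt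
  have hden : Tendsto (fun t => T - t) (𝓝[<] T) (𝓝[>] 0) := by
    refine tendsto_nhdsWithin_of_tendsto_nhds_of_eventually_within _ ?_ ?_
    · simpa using ((continuous_sub_left T).tendsto T).mono_left nhdsWithin_le_nhds
    · exact eventually_nhdsWithin_of_forall fun t ht => mem_Ioi.2 (sub_pos.2 ht)
  simpa only [div_eq_mul_inv, Function.comp_def] using
    hnum.pos_mul_atTop h (tendsto_inv_nhdsGT_zero.comp hden)

theorem mul_div_sub_add_pos (ha : 0 ≤ a) (hb : 0 < b) {t : ℝ} (ht : t ∈ Ico 0 T) :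
    0 < a * t / (T - t) + b := by
  have : 0 ≤ a * t / (T - t) := div_nonneg (mul_nonneg ha ht.1) (sub_pos.2 ht.2).le
  linarith

theorem strictAntiOn_one_div_sinh_mul_div_sub_add (ha : 0 < a) (hb : 0 < b) (hT : 0 < T) :
    StrictAntiOn (fun t => 1 / sinh (a * t / (T - t) + b)) (Ico 0 T) :=
  strictAntiOn_one_div_sinh.comp_strictMonoOn
    (fun _ hs _ ht hst => add_lt_add_left
      (strictMonoOn_mul_div_sub ha hT (mem_Iio.2 hs.2) (mem_Iio.2 ht.2) hst) b)
    fun _ ht => mul_div_sub_add_pos ha.le hb ht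

theorem continuousOn_one_div_sinh_mul_div_sub_add (ha : 0 ≤ a) (hb : 0 < b) :
    ContinuousOn (fun t => 1 / sinh (a * t / (T - t) + b)) (Ico 0 T) := by
  refine continuousOn_const.div ?_ fun t ht => (sinh_pos_iff.2 (mul_div_sub_add_pos ha hb ht)).ne'
  refine continuous_sinh.comp_continuousOn (ContinuousOn.add ?_ continuousOn_const)
  exact (continuousOn_const.mul continuousOn_id).div (continuousOn_const.sub continuousOn_id)
    fun t ht => (sub_pos.2 ht.2).ne'

theorem tendsto_one_div_sinh_mul_div_sub_add (h : 0 < a * T) :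
    Tendsto (fun t => 1 / sinh (a * t / (T - t) + b)) (𝓝[<] T) (𝓝 0) := by
  simpa only [one_div, Function.comp_def, Pi.inv_def] using
    (tendsto_sinh_atTop.comp (tendsto_atTop_add_const_right _ b
      (tendsto_mul_div_sub_nhdsLT h))).inv_tendsto_atTop

end Argument

section Piecewise

variable {α β : Type*} [LinearOrder α] {a T : α} {K : α → β}

theorem StrictAntiOn.Icc_of_Ico [Preorder β] (h : StrictAntiOn K (Ico a T))
    (hT : ∀ t ∈ Ico a T, K T < K t) : StrictAntiOn K (Icc a T) := by
  intro s hs t ht hst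
  rcases ht.2.eq_or_lt with rfl | htT
  · exact hT s ⟨hs.1, hst⟩
  · exact h ⟨hs.1, hst.trans htT⟩ ⟨ht.1, htT⟩ hst

theorem continuousOn_Ici_of_eq_const_of_le [TopologicalSpace α] [OrderTopology α]
    [TopologicalSpace β] {c : β} (hK : ContinuousOn K (Ico a T))
    (hlim : Tendsto K (𝓝[<] T) (𝓝 c)) (hc : ∀ t, T ≤ t → K t = c) :
    ContinuousOn K (Ici a) := by
  intro x hx
  rcases lt_trichotomy x T with hxT | rfl | hTx
  · exact (hK x ⟨hx, hxT⟩).mono_of_mem_nhdsWithin (inter_mem_nhdsWithin _ (Iio_mem_nhds hxT))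
  · refine ContinuousAt.continuousWithinAt ?_
    rw [ContinuousAt, ← nhdsLT_sup_nhdsGE, tendsto_sup, hc x le_rfl]
    exact ⟨hlim, tendsto_const_nhds.congr'
      (eventually_nhdsWithin_of_forall fun t ht => (hc t ht).symm)⟩
  · refine ((continuousAt_const (y := c)).congr ?_).continuousWithinAt
    exact mem_of_superset (Ioi_mem_nhds hTx) fun t ht => (hc t ht.le).symm

end Piecewise

theorem performance_function_csch_properties_general
    (Ts Δ einf al bl e₀ : ℝ)
    (hTs : 0 < Ts)
    (hal : 0 < al) (hbl : 0 < bl)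
    (he₀ : 0 < e₀ - Δ + einf)
    (c2l : ℝ)
    (hc2l : c2l = 2 * Real.exp bl / (Real.exp (2 * bl) - 1))
    (K : ℝ → ℝ)
    (hK₁ : ∀ t, 0 ≤ t → t < Ts →
      K t = ((e₀ - Δ + einf) / c2l) *
              (1 / Real.sinh (al * t / (Ts - t) + bl)) - einf)
    (hK₂ : ∀ t, Ts ≤ t → K t = -einf) :
    c2l = 1 / Real.sinh bl ∧
    K 0 = e₀ - Δ ∧
    StrictAntiOn K (Set.Icc 0 Ts) ∧
    Tendsto K (nhdsWithin Ts (Set.Iio Ts)) (nhds (-einf)) ∧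
    ContinuousOn K (Set.Ici 0) := by
  have hc : c2l = 1 / sinh bl := hc2l.trans (one_div_sinh_eq_two_mul_exp_div bl).symm
  have hc_pos : 0 < c2l := hc ▸ one_div_pos.2 (sinh_pos_iff.2 hbl)
  set C := (e₀ - Δ + einf) / c2l
  have hC : 0 < C := div_pos he₀ hc_pos
  have hKeq : EqOn K (fun t => C * (1 / sinh (al * t / (Ts - t) + bl)) - einf) (Ico 0 Ts) :=
    fun t ht => hK₁ t ht.1 ht.2
  have hanti : StrictAntiOn K (Ico 0 Ts) :=
    (StrictMono.comp_strictAntiOn (fun _ _ hxy => sub_lt_sub_right (mul_lt_mul_of_pos_left hxy hC) einf)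
      (strictAntiOn_one_div_sinh_mul_div_sub_add hal hbl hTs)).congr hKeq.symm
  have hlim : Tendsto K (𝓝[<] Ts) (𝓝 (-einf)) := by
    have h := ((tendsto_one_div_sinh_mul_div_sub_add (b := bl) (mul_pos hal hTs)).const_mul
      C).sub_const einf
    rw [mul_zero, zero_sub] at h
    exact h.congr' (mem_of_superset (Ico_mem_nhdsLT hTs) fun t ht => (hKeq ht).symm)
  have hcont : ContinuousOn K (Ico 0 Ts) :=
    ((continuousOn_const.mul (continuousOn_one_div_sinh_mul_div_sub_add hal.le hbl)).sub
      continuousOn_const).congr hKeq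
  refine ⟨hc, ?_, hanti.Icc_of_Ico fun t ht => ?_, hlim,
    continuousOn_Ici_of_eq_const_of_le hcont hlim hK₂⟩
  · rw [hK₁ 0 le_rfl hTs, mul_zero, zero_div, zero_add, ← hc, div_mul_cancel₀ _ hc_pos.ne']
    ring
  · have := mul_pos hC (one_div_pos.2 (sinh_pos_iff.2 (mul_div_sub_add_pos hal.le hbl ht)))
    rw [hK₂ Ts le_rfl, hKeq ht]
    linarith

/-- Properties of the novel performance function (25), built from the
hyperbolic cosecant `csch x = 1 / sinh x`. -/
theorem performance_function_csch_properties
    (Ts Δ einf al bl e₀ : ℝ)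
    (hTs : 0 < Ts) (hΔ : 0 < Δ) (heinf : 0 < einf)
    (hal : 0 < al) (hbl : 0 < bl)
    (he₀ : 0 < e₀ - Δ + einf)
    (c2l : ℝ)
    (hc2l : c2l = 2 * Real.exp bl / (Real.exp (2 * bl) - 1))
    (K : ℝ → ℝ)
    (hK₁ : ∀ t, 0 ≤ t → t < Ts →
      K t = ((e₀ - Δ + einf) / c2l) *
              (1 / Real.sinh (al * t / (Ts - t) + bl)) - einf)
    (hK₂ : ∀ t, Ts ≤ t → K t = -einf) :
    c2l = 1 / Real.sinh bl ∧
    K 0 = e₀ - Δ ∧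
    StrictAntiOn K (Set.Icc 0 Ts) ∧
    Tendsto K (nhdsWithin Ts (Set.Iio Ts)) (nhds (-einf)) ∧
    ContinuousOn K (Set.Ici 0) :=
  performance_function_csch_properties_general Ts Δ einf al bl e₀ hTs hal hbl he₀ c2l hc2l K hK₁ hK₂
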